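/- Let χ₁, χ₂ : ℝ → ℝ be C¹ functions. Define symmetric frame components h_{YZ} : ℝ^{1+3} → ℝ for Y, Z ∈ {L, L̲, 2, 3} by: h_{L̲L̲}(t,x) = −t·χ₂(x₁ − t), h_{L̲A}(t,x) = −¼ x_A χ₂(x₁ − t) for A = 2,3, h₂₂(t,x) = χ₁(x₁ − t) = −h₃₃(t,x), and h_{LL} = h_{LL̲} = h_{L2} = h_{L3} = h₂₃ = 0. Then h satisfies the three null-frame equations of the linearized wave coordinate condition identically on ℝ^{1+3}: (a) ∂_{L̲} h_{LL} − 2Σ_{A∈{2,3}} ∂_A h_{AL} + ∂_L (h₂₂ + h₃₃) = 0; (b) ∂_L h_{L̲L̲} − 2Σ_{A∈{2,3}} ∂_A h_{AL̲} + ∂_{L̲} (h₂₂ + h₃₃) = 0; (c) for each C ∈ {2,3}, ∂_{L̲} h_{LC} + ∂_L h_{L̲C} − 2Σ_{A∈{2,3}} ∂_A h_{AC} + ∂_C (−h_{LL̲} + h₂₂ + h₃₃) = 0. -/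

import Mathlib

noncomputable section

/-- The null frame `L = ∂ₜ + ∂₁, L̲ = ∂ₜ - ∂₁, ∂₂, ∂₃` as vectors in `ℝ⁴` with
coordinates `(t, x₁, x₂, x₃)`; index `0 = L`, `1 = L̲`, `2 = ∂₂`, `3 = ∂₃`. -/
def frameVec : Fin 4 → (Fin 4 → ℝ)
  | 0 => ![1, 1, 0, 0]
  | 1 => ![1, -1, 0, 0]
  | 2 => ![0, 0, 1, 0]
  | 3 => ![0, 0, 0, 1]

/-- Frame (directional) derivative `∂_Y f`. -/
def Dfr (Y : Fin 4) (f : (Fin 4 → ℝ) → ℝ) (x : Fin 4 → ℝ) : ℝ :=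
  fderiv ℝ f x (frameVec Y)

/-- The symmetric frame components `h_{YZ}`: `h_{L̲L̲} = -t·χ₂(x₁-t)`,
`h_{L̲A} = -¼x_A χ₂(x₁-t)`, `h₂₂ = χ₁(x₁-t) = -h₃₃`, all others zero. -/
def hFrame (χ₁ χ₂ : ℝ → ℝ) (Y Z : Fin 4) (x : Fin 4 → ℝ) : ℝ :=
  !![0, 0, 0, 0;
     0, -(x 0) * χ₂ (x 1 - x 0), -(1/4) * x 2 * χ₂ (x 1 - x 0),
       -(1/4) * x 3 * χ₂ (x 1 - x 0);
     0, -(1/4) * x 2 * χ₂ (x 1 - x 0), χ₁ (x 1 - x 0), 0;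
     0, -(1/4) * x 3 * χ₂ (x 1 - x 0), 0, -χ₁ (x 1 - x 0)] Y Z


section AuxWC

abbrev pjWC (i : Fin 4) : (Fin 4 → ℝ) →L[ℝ] ℝ := ContinuousLinearMap.proj i

lemma hasU_WC (x : Fin 4 → ℝ) :
    HasFDerivAt (fun y : Fin 4 → ℝ => y 1 - y 0) (pjWC 1 - pjWC 0) x :=
  ((pjWC 1).hasFDerivAt.sub (pjWC 0).hasFDerivAt)

variable {χ : ℝ → ℝ}

lemma hasChi_WC (hχ : ContDiff ℝ 1 χ) (x : Fin 4 → ℝ) :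
    HasFDerivAt (fun y : Fin 4 → ℝ => χ (y 1 - y 0))
      (deriv χ (x 1 - x 0) • (pjWC 1 - pjWC 0)) x :=
  (((hχ.differentiable one_ne_zero) (x 1 - x 0)).hasDerivAt).comp_hasFDerivAt x (hasU_WC x)

lemma fd_chi_WC (hχ : ContDiff ℝ 1 χ) (x v : Fin 4 → ℝ) :
    fderiv ℝ (fun y : Fin 4 → ℝ => χ (y 1 - y 0)) x v
      = deriv χ (x 1 - x 0) * (v 1 - v 0) := by
  rw [(hasChi_WC hχ x).fderiv]; simp [mul_comm]

lemma fd_neg_chi_WC (hχ : ContDiff ℝ 1 χ) (x v : Fin 4 → ℝ) :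
    fderiv ℝ (fun y : Fin 4 → ℝ => -χ (y 1 - y 0)) x v
      = -(deriv χ (x 1 - x 0) * (v 1 - v 0)) := by
  rw [HasFDerivAt.fderiv (f := fun y : Fin 4 → ℝ => -χ (y 1 - y 0)) (hasChi_WC hχ x).neg]; simp [mul_comm]

lemma fd_coord_mul_WC (hχ : ContDiff ℝ 1 χ) (c : ℝ) (i : Fin 4) (x v : Fin 4 → ℝ) :
    fderiv ℝ (fun y : Fin 4 → ℝ => c * y i * χ (y 1 - y 0)) x v
      = c * v i * χ (x 1 - x 0) + c * x i * (deriv χ (x 1 - x 0) * (v 1 - v 0)) := by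
  have h1 : HasFDerivAt (fun y : Fin 4 → ℝ => c * y i) (c • pjWC i) x := by
    simpa using ((pjWC i).hasFDerivAt.const_mul c)
  rw [HasFDerivAt.fderiv (f := fun y : Fin 4 → ℝ => c * y i * χ (y 1 - y 0)) (h1.mul (hasChi_WC hχ x))]
  simp [mul_comm, mul_assoc]; ring

lemma fd_t_mul_WC (hχ : ContDiff ℝ 1 χ) (x v : Fin 4 → ℝ) :
    fderiv ℝ (fun y : Fin 4 → ℝ => -(y 0) * χ (y 1 - y 0)) x v
      = -(v 0) * χ (x 1 - x 0) + -(x 0) * (deriv χ (x 1 - x 0) * (v 1 - v 0)) := by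
  have e : (fun y : Fin 4 → ℝ => -(y 0) * χ (y 1 - y 0))
      = fun y : Fin 4 → ℝ => (-1 : ℝ) * y 0 * χ (y 1 - y 0) := by
    funext y; ring
  rw [e, fd_coord_mul_WC hχ]; ring

end AuxWC

/-- `h` satisfies the three null-frame equations (a), (b), (c) of the
linearized wave coordinate condition identically on `ℝ^{1+3}`. -/
theorem linearized_wave_coordinate_condition (χ₁ χ₂ : ℝ → ℝ)
    (h₁ : ContDiff ℝ 1 χ₁) (h₂ : ContDiff ℝ 1 χ₂) :
    ∀ x : Fin 4 → ℝ,
      (Dfr 1 (hFrame χ₁ χ₂ 0 0) x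
          - 2 * (Dfr 2 (hFrame χ₁ χ₂ 2 0) x + Dfr 3 (hFrame χ₁ χ₂ 3 0) x)
          + Dfr 0 (fun y => hFrame χ₁ χ₂ 2 2 y + hFrame χ₁ χ₂ 3 3 y) x = 0) ∧
      (Dfr 0 (hFrame χ₁ χ₂ 1 1) x
          - 2 * (Dfr 2 (hFrame χ₁ χ₂ 2 1) x + Dfr 3 (hFrame χ₁ χ₂ 3 1) x)
          + Dfr 1 (fun y => hFrame χ₁ χ₂ 2 2 y + hFrame χ₁ χ₂ 3 3 y) x = 0) ∧
      (∀ C : Fin 4, C = 2 ∨ C = 3 →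
        Dfr 1 (hFrame χ₁ χ₂ 0 C) x + Dfr 0 (hFrame χ₁ χ₂ 1 C) x
          - 2 * (Dfr 2 (hFrame χ₁ χ₂ 2 C) x + Dfr 3 (hFrame χ₁ χ₂ 3 C) x)
          + Dfr C (fun y => -hFrame χ₁ χ₂ 0 1 y + hFrame χ₁ χ₂ 2 2 y
              + hFrame χ₁ χ₂ 3 3 y) x = 0) := by
  intro x
  have hmat := fun (Y Z : Fin 4) => rfl (a := hFrame χ₁ χ₂ Y Z)
  have e00 : hFrame χ₁ χ₂ 0 0 = fun _ => (0:ℝ) := by funext y; simp [hFrame, Matrix.vecHead, Matrix.vecTail]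
  have e01 : hFrame χ₁ χ₂ 0 1 = fun _ => (0:ℝ) := by funext y; simp [hFrame, Matrix.vecHead, Matrix.vecTail]
  have e02 : hFrame χ₁ χ₂ 0 2 = fun _ => (0:ℝ) := by funext y; simp [hFrame, Matrix.vecHead, Matrix.vecTail]
  have e03 : hFrame χ₁ χ₂ 0 3 = fun _ => (0:ℝ) := by funext y; simp [hFrame, Matrix.vecHead, Matrix.vecTail]
  have e20 : hFrame χ₁ χ₂ 2 0 = fun _ => (0:ℝ) := by funext y; simp [hFrame, Matrix.vecHead, Matrix.vecTail]
  have e30 : hFrame χ₁ χ₂ 3 0 = fun _ => (0:ℝ) := by funext y; simp [hFrame, Matrix.vecHead, Matrix.vecTail]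
  have e32 : hFrame χ₁ χ₂ 3 2 = fun _ => (0:ℝ) := by funext y; simp [hFrame, Matrix.vecHead, Matrix.vecTail]
  have e23 : hFrame χ₁ χ₂ 2 3 = fun _ => (0:ℝ) := by funext y; simp [hFrame, Matrix.vecHead, Matrix.vecTail]
  have e11 : hFrame χ₁ χ₂ 1 1 = fun y => -(y 0) * χ₂ (y 1 - y 0) := by
    funext y; simp [hFrame, Matrix.vecHead, Matrix.vecTail]
  have e21 : hFrame χ₁ χ₂ 2 1 = fun y => -(1/4 : ℝ) * y 2 * χ₂ (y 1 - y 0) := by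
    funext y; simp [hFrame, Matrix.vecHead, Matrix.vecTail]; try ring
  have e31 : hFrame χ₁ χ₂ 3 1 = fun y => -(1/4 : ℝ) * y 3 * χ₂ (y 1 - y 0) := by
    funext y; simp [hFrame, Matrix.vecHead, Matrix.vecTail]; try ring
  have e12 : hFrame χ₁ χ₂ 1 2 = fun y => -(1/4 : ℝ) * y 2 * χ₂ (y 1 - y 0) := by
    funext y; simp [hFrame, Matrix.vecHead, Matrix.vecTail]; try ring
  have e13 : hFrame χ₁ χ₂ 1 3 = fun y => -(1/4 : ℝ) * y 3 * χ₂ (y 1 - y 0) := by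
    funext y; simp [hFrame, Matrix.vecHead, Matrix.vecTail]; try ring
  have e22 : hFrame χ₁ χ₂ 2 2 = fun y => χ₁ (y 1 - y 0) := by funext y; simp [hFrame, Matrix.vecHead, Matrix.vecTail]
  have e33 : hFrame χ₁ χ₂ 3 3 = fun y => -χ₁ (y 1 - y 0) := by funext y; simp [hFrame, Matrix.vecHead, Matrix.vecTail]
  have esum : (fun y => hFrame χ₁ χ₂ 2 2 y + hFrame χ₁ χ₂ 3 3 y) = fun _ => (0:ℝ) := by
    funext y; simp [hFrame, Matrix.vecHead, Matrix.vecTail]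
  have esum' : (fun y => -hFrame χ₁ χ₂ 0 1 y + hFrame χ₁ χ₂ 2 2 y
      + hFrame χ₁ χ₂ 3 3 y) = fun _ => (0:ℝ) := by
    funext y; simp [hFrame, Matrix.vecHead, Matrix.vecTail]
  refine ⟨?_, ?_, ?_⟩
  · rw [show Dfr 1 (hFrame χ₁ χ₂ 0 0) x = 0 by rw [e00]; simp [Dfr],
      show Dfr 2 (hFrame χ₁ χ₂ 2 0) x = 0 by rw [e20]; simp [Dfr],
      show Dfr 3 (hFrame χ₁ χ₂ 3 0) x = 0 by rw [e30]; simp [Dfr],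
      show Dfr 0 (fun y => hFrame χ₁ χ₂ 2 2 y + hFrame χ₁ χ₂ 3 3 y) x = 0 by
        rw [esum]; simp [Dfr]]
    ring
  · rw [show Dfr 1 (fun y => hFrame χ₁ χ₂ 2 2 y + hFrame χ₁ χ₂ 3 3 y) x = 0 by
        rw [esum]; simp [Dfr]]
    simp only [Dfr, e11, e21, e31, fd_t_mul_WC h₂, fd_coord_mul_WC h₂]
    simp [frameVec]
    ring
  · rintro C (rfl | rfl)
    · rw [show Dfr 1 (hFrame χ₁ χ₂ 0 2) x = 0 by rw [e02]; simp [Dfr],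
        show Dfr 3 (hFrame χ₁ χ₂ 3 2) x = 0 by rw [e32]; simp [Dfr],
        show Dfr 2 (fun y => -hFrame χ₁ χ₂ 0 1 y + hFrame χ₁ χ₂ 2 2 y
            + hFrame χ₁ χ₂ 3 3 y) x = 0 by rw [esum']; simp [Dfr]]
      simp only [Dfr, e12, e22, fd_coord_mul_WC h₂, fd_chi_WC h₁]
      simp [frameVec]
    · rw [show Dfr 1 (hFrame χ₁ χ₂ 0 3) x = 0 by rw [e03]; simp [Dfr],
        show Dfr 2 (hFrame χ₁ χ₂ 2 3) x = 0 by rw [e23]; simp [Dfr],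
        show Dfr 3 (fun y => -hFrame χ₁ χ₂ 0 1 y + hFrame χ₁ χ₂ 2 2 y
            + hFrame χ₁ χ₂ 3 3 y) x = 0 by rw [esum']; simp [Dfr]]
      simp only [Dfr, e13, e33, fd_coord_mul_WC h₂, fd_neg_chi_WC h₁]
      simp [frameVec]


end
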